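/- Assume there exists at least one supersolution w* of the discrete HJB equation (T(w*) ≤ w* pointwise). With v_1 = f ∘ g^δ and v_{l+1} = T(v_l), the pointwise limit w_0(m) := lim_{l→∞} v_l(m) exists and is finite for every m ∈ ℕ_0^n, satisfies T(w_0) = w_0 (i.e. w_0 is a solution of the discrete HJB equation), and satisfies w_0 ≤ w for every supersolution w of the discrete HJB equation; that is, w_0 is the smallest supersolution of the discrete HJB equation. -/

import Mathlib

open MeasureTheory Filter

noncomputable section

/-- The grid point associated with a multi-index `m`: `g^δ(m) = (p₁ δ m₁, …, pₙ δ mₙ)`. -/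
def gdel (n : ℕ) (p : Fin n → ℝ) (δ : ℝ) (m : Fin n → ℕ) : Fin n → ℝ :=
  fun i => p i * δ * (m i : ℝ)

/-- The index of the closest grid point below `x`: `ρ^δ(x) = (⌊xᵢ/(δ pᵢ)⌋)ᵢ`. -/
def rho (n : ℕ) (p : Fin n → ℝ) (δ : ℝ) (x : Fin n → ℝ) : Fin n → ℕ :=
  fun i => ⌊x i / (δ * p i)⌋₊

/-- The closest grid point below `x`: `⟨x⟩^δ = g^δ(ρ^δ(x))`. -/
def proj (n : ℕ) (p : Fin n → ℝ) (δ : ℝ) (x : Fin n → ℝ) : Fin n → ℝ :=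
  gdel n p δ (rho n p δ x)

/-- `R(x) = λ ∫_{x - α ∉ ℝ₊ⁿ} υ(x,α) dF(α)`. -/
def Rpen (n : ℕ) (lam : ℝ) (F : Measure (Fin n → ℝ))
    (υ : (Fin n → ℝ) → (Fin n → ℝ) → ℝ) (x : Fin n → ℝ) : ℝ :=
  lam * ∫ α in {α : Fin n → ℝ | ¬ 0 ≤ x - α}, υ x α ∂F

/-- The discrete integral operator `I^δ`. -/
def Idel (n : ℕ) (p a : Fin n → ℝ) (lam c δ : ℝ) (F : Measure (Fin n → ℝ))
    (w : (Fin n → ℕ) → ℝ) (m : Fin n → ℕ) : ℝ :=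
  ∫ t in (0:ℝ)..δ, lam * Real.exp (-(c + lam) * t) *
    ∫ α in {α : Fin n → ℝ | α ≤ gdel n p δ m + t • p},
      (w (rho n p δ (gdel n p δ m + t • p - α)) +
        ∑ i, a i * ((gdel n p δ m + t • p - α) i
          - proj n p δ (gdel n p δ m + t • p - α) i)) ∂F

/-- The no-dividend operator `T₀`. -/
def T0 (n : ℕ) (p a : Fin n → ℝ) (lam c δ : ℝ) (F : Measure (Fin n → ℝ))
    (υ : (Fin n → ℝ) → (Fin n → ℝ) → ℝ) (w : (Fin n → ℕ) → ℝ) (m : Fin n → ℕ) : ℝ :=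
  w (m + 1) * Real.exp (-(c + lam) * δ) + Idel n p a lam c δ F w m
    - ∫ t in (0:ℝ)..δ, Real.exp (-(c + lam) * t) * Rpen n lam F υ (gdel n p δ m + t • p)

/-- The dividend-payment operator `Tᵢ` of company `i` (requires `m i > 0`). -/
def Ti (n : ℕ) (p a : Fin n → ℝ) (δ : ℝ) (i : Fin n) (w : (Fin n → ℕ) → ℝ)
    (m : Fin n → ℕ) : ℝ :=
  w (m - Pi.single i 1) + δ * a i * p i

/-- The switch operator `Tₛ`. -/
def Ts (n : ℕ) (p : Fin n → ℝ) (δ : ℝ) (f : (Fin n → ℝ) → ℝ) (w : (Fin n → ℕ) → ℝ)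
    (m : Fin n → ℕ) : ℝ :=
  f (gdel n p δ m)

/-- The Bellman operator `T = max{T₀, (Tᵢ over i with mᵢ>0), Tₛ}`. -/
def Tbell (n : ℕ) (p a : Fin n → ℝ) (lam c δ : ℝ) (F : Measure (Fin n → ℝ))
    (υ : (Fin n → ℝ) → (Fin n → ℝ) → ℝ) (f : (Fin n → ℝ) → ℝ)
    (w : (Fin n → ℕ) → ℝ) (m : Fin n → ℕ) : ℝ :=
  sSup ({T0 n p a lam c δ F υ w m, Ts n p δ f w m} ∪
    (fun i => Ti n p a δ i w m) '' {i | 0 < m i})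


/-!
`T` is monotone and `T_s` is one of the terms of its maximum, so `v₁ = f ∘ g^δ ≤ T w ≤ w` for
every supersolution `w`; inductively the iterates `v_l` increase and stay below every
supersolution, hence converge to some `w₀` bounded by all of them. Monotonicity gives
`w₀ ≤ T w₀`. Conversely each term of the maximum passes to the limit along `v_l`: for `T₀` this is
dominated convergence in `I^δ`, where only the finitely many values `w k`, `k ≤ m + 1`, enter.
So `T w₀ ≤ w₀`.
-/

theorem exists_tendsto_fixedPoint_le_of_supersolution {ι : Type*}
    {T : (ι → ℝ) → ι → ℝ} (hT : Monotone T)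
    (hT_lsc : ∀ W : ℕ → ι → ℝ, Monotone W → ∀ W₀ w : ι → ℝ,
      (∀ k, Tendsto (fun l => W l k) atTop (nhds (W₀ k))) → (∀ l, T (W l) ≤ w) → T W₀ ≤ w)
    {u : ℕ → ι → ℝ} (hu₀ : ∀ w, u 0 ≤ T w) (hu : ∀ l, u (l + 1) = T (u l))
    (hsuper : ∃ w, T w ≤ w) :
    ∃ w₀ : ι → ℝ, (∀ k, Tendsto (fun l => u l k) atTop (nhds (w₀ k))) ∧ T w₀ = w₀ ∧
      ∀ w, T w ≤ w → w₀ ≤ w := by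
  have hmono : Monotone u := by
    refine monotone_nat_of_le_succ fun l => ?_
    induction l with
    | zero => rw [hu]; exact hu₀ _
    | succ l ih => rw [hu, hu (l + 1)]; exact hT ih
  have hle : ∀ w, T w ≤ w → ∀ l, u l ≤ w := by
    intro w hw l
    induction l with
    | zero => exact (hu₀ w).trans hw
    | succ l ih => rw [hu]; exact (hT ih).trans hw
  obtain ⟨ws, hws⟩ := hsuper
  have hbdd : ∀ k, BddAbove (Set.range fun l => u l k) :=
    fun k => ⟨ws k, Set.forall_mem_range.2 fun l => hle ws hws l k⟩
  set w₀ : ι → ℝ := fun k => ⨆ l, u l k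
  have hu_le : ∀ l, u l ≤ w₀ := fun l k => le_ciSup (hbdd k) l
  have htend : ∀ k, Tendsto (fun l => u l k) atTop (nhds (w₀ k)) :=
    fun k => tendsto_atTop_ciSup (fun _ _ h => hmono h k) (hbdd k)
  refine ⟨w₀, htend, le_antisymm ?_ ?_, fun w hw k => ciSup_le fun l => hle w hw l k⟩
  · exact hT_lsc u hmono w₀ w₀ htend fun l => hu l ▸ hu_le (l + 1)
  · intro k
    refine ciSup_le fun l => ?_
    cases l with
    | zero => exact hu₀ w₀ k
    | succ l => rw [hu]; exact hT (hu_le l) k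

lemma exists_abs_le_on_Iic {κ : Type*} [Preorder κ] [LocallyFiniteOrderBot κ] (w : κ → ℝ)
    (m : κ) : ∃ C, ∀ k ≤ m, |w k| ≤ C := by
  obtain ⟨C, hC⟩ := ((Set.finite_Iic m).image fun k => |w k|).bddAbove
  exact ⟨C, fun k hk => hC ⟨k, hk, rfl⟩⟩

section Grid
variable {n : ℕ} {p : Fin n → ℝ} {δ : ℝ}

lemma rho_mono (hp : ∀ i, 0 < p i) (hδ : 0 < δ) : Monotone (rho n p δ) :=
  fun _ _ h i => Nat.floor_le_floor (div_le_div_of_nonneg_right (h i) (mul_pos hδ (hp i)).le)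

lemma rho_gdel (hp : ∀ i, 0 < p i) (hδ : 0 < δ) (k : Fin n → ℕ) :
    rho n p δ (gdel n p δ k) = k := by
  funext i
  have : p i * δ * (k i : ℝ) / (δ * p i) = k i := by
    field_simp [(hp i).ne', hδ.ne']
  simp only [rho, gdel, this, Nat.floor_natCast]

lemma gdel_add_smul_le (hp : ∀ i, 0 < p i) {t : ℝ} (ht : t ≤ δ) (m : Fin n → ℕ) :
    gdel n p δ m + t • p ≤ gdel n p δ (m + 1) := by
  intro i
  have := mul_le_mul_of_nonneg_left ht (hp i).le
  simp only [gdel, Pi.add_apply, Pi.smul_apply, smul_eq_mul, Pi.one_apply, Nat.cast_add,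
    Nat.cast_one]
  nlinarith

lemma rho_sub_le (hp : ∀ i, 0 < p i) (hδ : 0 < δ) {t : ℝ} (ht : t ≤ δ) (m : Fin n → ℕ)
    {α : Fin n → ℝ} (hα : 0 ≤ α) :
    rho n p δ (gdel n p δ m + t • p - α) ≤ m + 1 :=
  (rho_mono hp hδ ((sub_le_self _ hα).trans (gdel_add_smul_le hp ht m))).trans_eq
    (rho_gdel hp hδ _)

lemma sub_proj_mem_Icc (hp : ∀ i, 0 < p i) (hδ : 0 < δ) {x : Fin n → ℝ} {i : Fin n}
    (hx : 0 ≤ x i) : x i - proj n p δ x i ∈ Set.Icc 0 (δ * p i) := by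
  have hd : 0 < δ * p i := mul_pos hδ (hp i)
  have h₁ := Nat.floor_le (div_nonneg hx hd.le)
  have h₂ := Nat.lt_floor_add_one (x i / (δ * p i))
  rw [le_div_iff₀ hd] at h₁
  rw [div_lt_iff₀ hd] at h₂
  simp only [proj, gdel, rho, Set.mem_Icc]
  constructor <;> nlinarith

lemma abs_sum_mul_sub_proj_le (hp : ∀ i, 0 < p i) (hδ : 0 < δ) (a : Fin n → ℝ)
    {x : Fin n → ℝ} (hx : 0 ≤ x) :
    |∑ i, a i * (x i - proj n p δ x i)| ≤ ∑ i, |a i| * (δ * p i) := by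
  refine (Finset.abs_sum_le_sum_abs _ _).trans (Finset.sum_le_sum fun i _ => ?_)
  obtain ⟨h₀, h₁⟩ := sub_proj_mem_Icc hp hδ (hx i)
  rw [abs_mul, abs_of_nonneg h₀]
  exact mul_le_mul_of_nonneg_left h₁ (abs_nonneg _)

lemma measurable_rho (p : Fin n → ℝ) (δ : ℝ) : Measurable (rho n p δ) :=
  measurable_pi_lambda _ fun i => Nat.measurable_floor.comp ((measurable_pi_apply i).div_const _)

lemma measurable_proj_apply (p : Fin n → ℝ) (δ : ℝ) (i : Fin n) :
    Measurable fun x => proj n p δ x i :=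
  (measurable_from_top.comp ((measurable_pi_apply i).comp (measurable_rho p δ))).const_mul _

end Grid

section DiscreteIntegral
variable {n : ℕ} {p a : Fin n → ℝ} {lam c δ : ℝ} {F : Measure (Fin n → ℝ)}

/-- The integrand of `I^δ` as a function of the surplus `x = g^δ(m) + t p - α` after a claim. -/
def idelIntegrand (n : ℕ) (p a : Fin n → ℝ) (δ : ℝ) (w : (Fin n → ℕ) → ℝ) (x : Fin n → ℝ) : ℝ :=
  w (rho n p δ x) + ∑ i, a i * (x i - proj n p δ x i)

def idelInner (n : ℕ) (p a : Fin n → ℝ) (δ : ℝ) (F : Measure (Fin n → ℝ))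
    (w : (Fin n → ℕ) → ℝ) (m : Fin n → ℕ) (t : ℝ) : ℝ :=
  ∫ α in Set.Iic (gdel n p δ m + t • p), idelIntegrand n p a δ w (gdel n p δ m + t • p - α) ∂F

lemma Idel_eq_integral_idelInner (w : (Fin n → ℕ) → ℝ) (m : Fin n → ℕ) :
    Idel n p a lam c δ F w m =
      ∫ t in (0:ℝ)..δ, lam * Real.exp (-(c + lam) * t) * idelInner n p a δ F w m t := rfl

lemma measurable_idelIntegrand (p a : Fin n → ℝ) (δ : ℝ) (w : (Fin n → ℕ) → ℝ) :
    Measurable (idelIntegrand n p a δ w) :=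
  ((measurable_of_countable w).comp (measurable_rho p δ)).add <|
    Finset.measurable_sum _ fun i _ =>
      ((measurable_pi_apply i).sub (measurable_proj_apply p δ i)).const_mul _

lemma measurable_idelInner [SFinite F] (w : (Fin n → ℕ) → ℝ) (m : Fin n → ℕ) :
    Measurable (idelInner n p a δ F w m) := by
  let S : Set (ℝ × (Fin n → ℝ)) := {q | q.2 ≤ gdel n p δ m + q.1 • p}
  have hS : MeasurableSet S := measurableSet_le (by fun_prop) (by fun_prop)
  have hG : StronglyMeasurable
      (S.indicator fun q => idelIntegrand n p a δ w (gdel n p δ m + q.1 • p - q.2)) :=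
    (((measurable_idelIntegrand p a δ w).comp (by fun_prop)).indicator hS).stronglyMeasurable
  convert (hG.integral_prod_right' (ν := F)).measurable using 2 with t
  rw [idelInner, ← integral_indicator measurableSet_Iic]
  rfl

-- After a claim the surplus lies in `[0, g^δ(m + 1)]`, so `ρ^δ` of it is at most `m + 1`.
lemma ae_abs_idelIntegrand_le (hp : ∀ i, 0 < p i) (hδ : 0 < δ) (hF : ∀ᵐ α ∂F, 0 ≤ α)
    {t : ℝ} (ht : t ≤ δ) {w : (Fin n → ℕ) → ℝ} {m : Fin n → ℕ} {C : ℝ}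
    (hw : ∀ k ≤ m + 1, |w k| ≤ C) :
    ∀ᵐ α ∂F.restrict (Set.Iic (gdel n p δ m + t • p)),
      ‖idelIntegrand n p a δ w (gdel n p δ m + t • p - α)‖ ≤ C + ∑ i, |a i| * (δ * p i) := by
  filter_upwards [ae_restrict_of_ae hF, ae_restrict_mem measurableSet_Iic] with α hα hαle
  exact (abs_add_le _ _).trans (add_le_add (hw _ (rho_sub_le hp hδ ht m hα))
    (abs_sum_mul_sub_proj_le hp hδ a (sub_nonneg.2 hαle)))

lemma integrableOn_idelIntegrand [IsFiniteMeasure F] (hp : ∀ i, 0 < p i) (hδ : 0 < δ)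
    (hF : ∀ᵐ α ∂F, 0 ≤ α) {t : ℝ} (ht : t ≤ δ) (w : (Fin n → ℕ) → ℝ) (m : Fin n → ℕ) :
    IntegrableOn (fun α => idelIntegrand n p a δ w (gdel n p δ m + t • p - α))
      (Set.Iic (gdel n p δ m + t • p)) F := by
  obtain ⟨C, hC⟩ := exists_abs_le_on_Iic w (m + 1)
  exact Integrable.mono' (integrable_const _)
    ((measurable_idelIntegrand p a δ w).comp (by fun_prop)).aestronglyMeasurable
    (ae_abs_idelIntegrand_le hp hδ hF ht hC)

lemma abs_idelInner_le [IsProbabilityMeasure F] (hp : ∀ i, 0 < p i) (hδ : 0 < δ)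
    (hF : ∀ᵐ α ∂F, 0 ≤ α) {t : ℝ} (ht : t ≤ δ) {w : (Fin n → ℕ) → ℝ} {m : Fin n → ℕ} {C : ℝ}
    (hw : ∀ k ≤ m + 1, |w k| ≤ C) :
    |idelInner n p a δ F w m t| ≤ C + ∑ i, |a i| * (δ * p i) := by
  have hC : 0 ≤ C + ∑ i, |a i| * (δ * p i) :=
    add_nonneg ((abs_nonneg _).trans (hw 0 zero_le))
      (Finset.sum_nonneg fun i _ => mul_nonneg (abs_nonneg _) (mul_pos hδ (hp i)).le)
  calc |idelInner n p a δ F w m t|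
      ≤ (C + ∑ i, |a i| * (δ * p i)) * F.real (Set.Iic (gdel n p δ m + t • p)) :=
        norm_setIntegral_le_of_norm_le_const_ae (measure_lt_top _ _)
          (ae_abs_idelIntegrand_le hp hδ hF ht hw)
    _ ≤ C + ∑ i, |a i| * (δ * p i) := mul_le_of_le_one_right hC measureReal_le_one

lemma idelInner_mono [IsFiniteMeasure F] (hp : ∀ i, 0 < p i) (hδ : 0 < δ)
    (hF : ∀ᵐ α ∂F, 0 ≤ α) {t : ℝ} (ht : t ≤ δ) {w w' : (Fin n → ℕ) → ℝ} (hww' : w ≤ w')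
    (m : Fin n → ℕ) :
    idelInner n p a δ F w m t ≤ idelInner n p a δ F w' m t :=
  integral_mono (integrableOn_idelIntegrand hp hδ hF ht w m)
    (integrableOn_idelIntegrand hp hδ hF ht w' m) fun _ => add_le_add_left (hww' _) _

lemma tendsto_idelInner [IsFiniteMeasure F] (hp : ∀ i, 0 < p i) (hδ : 0 < δ)
    (hF : ∀ᵐ α ∂F, 0 ≤ α) {t : ℝ} (ht : t ≤ δ) {W : ℕ → (Fin n → ℕ) → ℝ}
    {W₀ : (Fin n → ℕ) → ℝ} {m : Fin n → ℕ} {C : ℝ} (hW : ∀ l, ∀ k ≤ m + 1, |W l k| ≤ C)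
    (hlim : ∀ k, Tendsto (fun l => W l k) atTop (nhds (W₀ k))) :
    Tendsto (fun l => idelInner n p a δ F (W l) m t) atTop
      (nhds (idelInner n p a δ F W₀ m t)) :=
  tendsto_integral_of_dominated_convergence _
    (fun l => ((measurable_idelIntegrand p a δ (W l)).comp (by fun_prop)).aestronglyMeasurable)
    (integrable_const _) (fun l => ae_abs_idelIntegrand_le hp hδ hF ht (hW l))
    (Eventually.of_forall fun _ => (hlim _).add_const _)

lemma intervalIntegrable_idelInner [IsProbabilityMeasure F] (hp : ∀ i, 0 < p i) (hδ : 0 < δ)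
    (hF : ∀ᵐ α ∂F, 0 ≤ α) (w : (Fin n → ℕ) → ℝ) (m : Fin n → ℕ) :
    IntervalIntegrable (fun t => lam * Real.exp (-(c + lam) * t) * idelInner n p a δ F w m t)
      volume 0 δ := by
  obtain ⟨C, hC⟩ := exists_abs_le_on_Iic w (m + 1)
  rw [intervalIntegrable_iff_integrableOn_Ioc_of_le hδ.le]
  refine Integrable.mul_bdd (c := C + ∑ i, |a i| * (δ * p i))
    (Continuous.integrableOn_Ioc (by fun_prop))
    (measurable_idelInner w m).aestronglyMeasurable ?_
  filter_upwards [ae_restrict_mem measurableSet_Ioc] with t ht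
  exact abs_idelInner_le hp hδ hF ht.2 hC

lemma Idel_mono [IsProbabilityMeasure F] (hp : ∀ i, 0 < p i) (hlam : 0 ≤ lam) (hδ : 0 < δ)
    (hF : ∀ᵐ α ∂F, 0 ≤ α) {w w' : (Fin n → ℕ) → ℝ} (hww' : w ≤ w') (m : Fin n → ℕ) :
    Idel n p a lam c δ F w m ≤ Idel n p a lam c δ F w' m :=
  intervalIntegral.integral_mono_on hδ.le (intervalIntegrable_idelInner hp hδ hF w m)
    (intervalIntegrable_idelInner hp hδ hF w' m) fun _ ht =>
      mul_le_mul_of_nonneg_left (idelInner_mono hp hδ hF ht.2 hww' m)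
        (mul_nonneg hlam (Real.exp_pos _).le)

lemma tendsto_Idel [IsProbabilityMeasure F] (hp : ∀ i, 0 < p i) (hδ : 0 < δ)
    (hF : ∀ᵐ α ∂F, 0 ≤ α) {W : ℕ → (Fin n → ℕ) → ℝ} {W₀ : (Fin n → ℕ) → ℝ} {m : Fin n → ℕ} {C : ℝ}
    (hW : ∀ l, ∀ k ≤ m + 1, |W l k| ≤ C)
    (hlim : ∀ k, Tendsto (fun l => W l k) atTop (nhds (W₀ k))) :
    Tendsto (fun l => Idel n p a lam c δ F (W l) m) atTop
      (nhds (Idel n p a lam c δ F W₀ m)) := by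
  simp only [Idel_eq_integral_idelInner]
  refine intervalIntegral.tendsto_integral_filter_of_dominated_convergence
    (fun t => ‖lam * Real.exp (-(c + lam) * t)‖ * (C + ∑ i, |a i| * (δ * p i)))
    (Eventually.of_forall fun l =>
      ((by fun_prop : Measurable fun t : ℝ => lam * Real.exp (-(c + lam) * t)).mul
        (measurable_idelInner (W l) m)).aestronglyMeasurable)
    (Eventually.of_forall fun l => ae_of_all _ fun t ht => ?_)
    (Continuous.intervalIntegrable (by fun_prop) _ _)
    (ae_of_all _ fun t ht => ?_)
  · rw [Set.uIoc_of_le hδ.le] at ht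
    rw [norm_mul]
    exact mul_le_mul_of_nonneg_left (abs_idelInner_le hp hδ hF ht.2 (hW l)) (norm_nonneg _)
  · rw [Set.uIoc_of_le hδ.le] at ht
    exact (tendsto_idelInner hp hδ hF ht.2 hW hlim).const_mul _

end DiscreteIntegral

section Bellman
variable {n : ℕ} {p a : Fin n → ℝ} {lam c δ : ℝ} {F : Measure (Fin n → ℝ)}
  {υ : (Fin n → ℝ) → (Fin n → ℝ) → ℝ} {f : (Fin n → ℝ) → ℝ}

lemma Tbell_le_iff {w : (Fin n → ℕ) → ℝ} {m : Fin n → ℕ} {L : ℝ} :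
    Tbell n p a lam c δ F υ f w m ≤ L ↔
      T0 n p a lam c δ F υ w m ≤ L ∧ Ts n p δ f w m ≤ L ∧
        ∀ i, 0 < m i → Ti n p a δ i w m ≤ L := by
  rw [Tbell, csSup_le_iff (Set.toFinite _).bddAbove
    ⟨_, Set.mem_union_left _ (Set.mem_insert _ _)⟩]
  simp [or_imp, forall_and, and_assoc]

lemma Ts_le_Tbell (w : (Fin n → ℕ) → ℝ) (m : Fin n → ℕ) :
    f (gdel n p δ m) ≤ Tbell n p a lam c δ F υ f w m :=
  (Tbell_le_iff.1 le_rfl).2.1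

variable [IsProbabilityMeasure F]

lemma Tbell_mono (hp : ∀ i, 0 < p i) (hlam : 0 ≤ lam) (hδ : 0 < δ) (hF : ∀ᵐ α ∂F, 0 ≤ α) :
    Monotone (Tbell n p a lam c δ F υ f) := by
  intro w w' hww' m
  obtain ⟨h₀, hs, hi⟩ := Tbell_le_iff.1 (le_refl (Tbell n p a lam c δ F υ f w' m))
  refine Tbell_le_iff.2 ⟨le_trans ?_ h₀, hs, fun i him => le_trans ?_ (hi i him)⟩
  · exact sub_le_sub_right (add_le_add
      (mul_le_mul_of_nonneg_right (hww' (m + 1)) (Real.exp_pos _).le)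
      (Idel_mono hp hlam hδ hF hww' m)) _
  · exact add_le_add_left (hww' _) _

lemma Tbell_le_of_monotone_tendsto (hp : ∀ i, 0 < p i) (hδ : 0 < δ) (hF : ∀ᵐ α ∂F, 0 ≤ α)
    {W : ℕ → (Fin n → ℕ) → ℝ} (hW : Monotone W) {W₀ w : (Fin n → ℕ) → ℝ}
    (hlim : ∀ k, Tendsto (fun l => W l k) atTop (nhds (W₀ k)))
    (hle : ∀ l, Tbell n p a lam c δ F υ f (W l) ≤ w) :
    Tbell n p a lam c δ F υ f W₀ ≤ w := by
  intro m
  obtain ⟨C, hC⟩ := exists_abs_le_on_Iic (fun k => max |W 0 k| |W₀ k|) (m + 1)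
  have hWC : ∀ l, ∀ k ≤ m + 1, |W l k| ≤ C := fun l k hk =>
    (abs_le_max_abs_abs (hW (Nat.zero_le l) k)
      (Monotone.ge_of_tendsto (fun _ _ h => hW h k) (hlim k) l)).trans
      ((le_abs_self _).trans (hC k hk))
  have hle' := fun l => Tbell_le_iff.1 (hle l m)
  have hT0 : Tendsto (fun l => T0 n p a lam c δ F υ (W l) m) atTop
      (nhds (T0 n p a lam c δ F υ W₀ m)) :=
    (((hlim (m + 1)).mul_const _).add (tendsto_Idel hp hδ hF hWC hlim)).sub_const _
  exact Tbell_le_iff.2 ⟨le_of_tendsto' hT0 fun l => (hle' l).1, (hle' 0).2.1,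
    fun i him => le_of_tendsto' ((hlim _).add_const _) fun l => (hle' l).2.2 i him⟩

end Bellman

theorem stmt3_general (n : ℕ) (p a : Fin n → ℝ)
    (hp : ∀ i, 0 < p i)
    (lam c δ : ℝ) (hlam : 0 < lam) (hδ : 0 < δ)
    (F : Measure (Fin n → ℝ)) [IsProbabilityMeasure F]
    (hFpos : F {α | ¬ 0 ≤ α} = 0)
    (υ : (Fin n → ℝ) → (Fin n → ℝ) → ℝ)
    (f : (Fin n → ℝ) → ℝ)
    (hexists : ∃ w : (Fin n → ℕ) → ℝ, ∀ m, Tbell n p a lam c δ F υ f w m ≤ w m)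
    (v : ℕ → (Fin n → ℕ) → ℝ)
    (hv1 : ∀ m, v 1 m = f (gdel n p δ m))
    (hvrec : ∀ l, 1 ≤ l → v (l + 1) = Tbell n p a lam c δ F υ f (v l)) :
    ∃ w₀ : (Fin n → ℕ) → ℝ,
      (∀ m, Tendsto (fun l => v l m) atTop (nhds (w₀ m))) ∧
      (∀ m, Tbell n p a lam c δ F υ f w₀ m = w₀ m) ∧
      (∀ w : (Fin n → ℕ) → ℝ, (∀ m, Tbell n p a lam c δ F υ f w m ≤ w m) →
        ∀ m, w₀ m ≤ w m) := by
  have hF : ∀ᵐ α ∂F, 0 ≤ α := ae_iff.2 hFpos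
  obtain ⟨w₀, hlim, hfix, hleast⟩ :=
    exists_tendsto_fixedPoint_le_of_supersolution (Tbell_mono hp hlam.le hδ hF)
      (fun _ hW _ _ hlim hle => Tbell_le_of_monotone_tendsto hp hδ hF hW hlim hle)
      (u := fun l => v (l + 1)) (fun w m => hv1 m ▸ Ts_le_Tbell w m)
      (fun l => hvrec (l + 1) (Nat.le_add_left 1 l)) hexists
  exact ⟨w₀, fun m => (tendsto_add_atTop_iff_nat 1).1 (hlim m), congrFun hfix, hleast⟩

/-- if a discrete supersolution exists, the value-iteration limit `w₀` exists,
is a fixed point of `T`, and is the smallest discrete supersolution. -/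
theorem stmt3 (n : ℕ) (hn : 1 ≤ n) (p a : Fin n → ℝ)
    (hp : ∀ i, 0 < p i) (ha : ∀ i, 0 < a i)
    (lam c δ : ℝ) (hlam : 0 < lam) (hc : 0 < c) (hδ : 0 < δ)
    (F : Measure (Fin n → ℝ)) [IsProbabilityMeasure F]
    (hFpos : F {α | ¬ 0 ≤ α} = 0) (hF0 : F {0} = 0)
    (hFmom : Integrable (fun α => ‖α‖) F)
    (υ : (Fin n → ℝ) → (Fin n → ℝ) → ℝ) (hυmeas : Measurable (Function.uncurry υ))
    (hυint : Integrable (fun α => |υ 0 α|) F)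
    (hRcont : ContinuousOn (Rpen n lam F υ) {x | 0 ≤ x})
    (f : (Fin n → ℝ) → ℝ)
    (hexists : ∃ w : (Fin n → ℕ) → ℝ, ∀ m, Tbell n p a lam c δ F υ f w m ≤ w m)
    (v : ℕ → (Fin n → ℕ) → ℝ)
    (hv1 : ∀ m, v 1 m = f (gdel n p δ m))
    (hvrec : ∀ l, 1 ≤ l → v (l + 1) = Tbell n p a lam c δ F υ f (v l)) :
    ∃ w₀ : (Fin n → ℕ) → ℝ,
      (∀ m, Tendsto (fun l => v l m) atTop (nhds (w₀ m))) ∧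
      (∀ m, Tbell n p a lam c δ F υ f w₀ m = w₀ m) ∧
      (∀ w : (Fin n → ℕ) → ℝ, (∀ m, Tbell n p a lam c δ F υ f w m ≤ w m) →
        ∀ m, w₀ m ≤ w m) :=
  stmt3_general n p a hp lam c δ hlam hδ F hFpos υ f hexists v hv1 hvrec

end
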